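/- arXiv:1410.8774 — 2 statements merged into one kernel-verified Lean document; each statement's English description precedes it below -/
import Mathlib

section
/- Let H be a finite connected bipartite graph with parts W and B that contains no induced subgraph isomorphic to S_{1,1,3} and contains an induced path P_8 on 8 vertices. Then H is either a chordless path or a chordless cycle (i.e. H itself is an induced path or an induced cycle). -/
open SimpleGraph

/-- `S` is an independent set in `G`: pairwise non-adjacent vertices. -/
def IndepOn {V : Type*} (G : SimpleGraph V) (S : Set V) : Prop :=
  S.Pairwise fun u v => ¬ G.Adj u v

/-- `NSet G U` is the set of vertices adjacent to at least one vertex of `U`. -/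
def NSet {V : Type*} (G : SimpleGraph V) (U : Set V) : Set V :=
  {v | ∃ u ∈ U, G.Adj u v}

/-- `(W, B)` is a bipartition of `G` into two independent parts covering all vertices. -/
def IsBipartition {V : Type*} (G : SimpleGraph V) (W B : Set V) : Prop :=
  W ∪ B = Set.univ ∧ Disjoint W B ∧ IndepOn G W ∧ IndepOn G B

/-- A bipartite graph `G` with parts `W` and `B` is irreducible if
(a) `|W| = |B| - 1`, (b) every nonempty `A ⊆ W` satisfies `|A| < |N(A) ∩ B|`,
and (c) `G` is connected. -/
def IrreducibleBip {V : Type*} (G : SimpleGraph V) (W B : Set V) : Prop :=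
  IsBipartition G W B ∧
  W.ncard + 1 = B.ncard ∧
  (∀ A ⊆ W, A.Nonempty → A.ncard < (NSet G A ∩ B).ncard) ∧
  G.Connected

/-- The simple tree `T_k`: the star `K_{1,k}` with each edge subdivided once.
Vertex `0` is the centre, vertices `1,…,k` are the subdivision vertices `a_i`,
and vertices `k+1,…,2k` are the leaves `b_i = i + k`. -/
def simpleTree (k : ℕ) : SimpleGraph (Fin (2 * k + 1)) :=
  SimpleGraph.fromRel fun i j =>
    (i.val = 0 ∧ 1 ≤ j.val ∧ j.val ≤ k) ∨ (1 ≤ i.val ∧ i.val ≤ k ∧ j.val = i.val + k)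

/-- The tree `S_{1,1,3}`: three leaves at distances 1, 1, 3 from the unique degree-3
vertex `0`. Edges: 0-1, 0-2, 0-3, 3-4, 4-5. -/
def S113 : SimpleGraph (Fin 6) :=
  SimpleGraph.fromRel fun i j =>
    (i = 0 ∧ j = 1) ∨ (i = 0 ∧ j = 2) ∨ (i = 0 ∧ j = 3) ∨ (i = 3 ∧ j = 4) ∨ (i = 4 ∧ j = 5)

/-- The claw `K_{1,3}`-freeness. -/
def ClawFree {V : Type*} (G : SimpleGraph V) : Prop :=
  IsEmpty (completeBipartiteGraph (Fin 1) (Fin 3) ↪g G)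

/-!
Let `p 0, …, p n` be a longest induced path, `n ≥ 7`. If a vertex `w` off the path is adjacent
to an interior vertex `p i`, then it is adjacent to `p (i + 2)` as well (or `p i` would be the
centre of an `S_{1,1,3}` with leaves `p (i - 1)`, `w` and tail `p (i + 1), p (i + 2), p (i + 3)`;
bipartiteness takes care of all chords between vertices of equal parity), and symmetrically
to `p (i - 2)`. Walking down and up again, `w` sees `p k` and `p (k + 4)` for some `k ∈ {1, 2}`,
and then `p k` is the centre of an `S_{1,1,3}` with leaves `p (k - 1)`, `p (k + 1)` and tail
`w, p (k + 4), p (k + 5)`. So vertices off the path only see its ends, and by maximality a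
vertex seeing one end sees both: the path closes up to an induced cycle of length `n + 2`.
A vertex off that cycle but adjacent to it would see an interior vertex of the induced path
left after deleting a suitable vertex of the cycle. Connectedness finishes the proof.
-/

instance : DecidableRel S113.Adj :=
  fun _ _ => inferInstanceAs (Decidable (_ ∧ _))

theorem S113_eq_or_twins_of_adj_iff {i j : Fin 6} (h : ∀ k, S113.Adj k i ↔ S113.Adj k j) :
    i = j ∨ (i = 1 ∧ j = 2) ∨ (i = 2 ∧ j = 1) := by
  revert h; revert i j; decide

namespace IsBipartition

variable {V : Type*} {G : SimpleGraph V} {W B : Set V}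

theorem mem_iff_notMem_of_adj (h : IsBipartition G W B) {x y : V} (hxy : G.Adj x y) :
    x ∈ W ↔ y ∉ W := by
  have hcover (z : V) : z ∈ W ∨ z ∈ B := by
    rw [← Set.mem_union, h.1]; trivial
  have hB {z : V} (hz : z ∈ B) : z ∉ W := Set.disjoint_right.mp h.2.1 hz
  rcases hcover x with hx | hx <;> rcases hcover y with hy | hy
  · exact absurd hxy (h.2.2.1 hx hy hxy.ne)
  · exact iff_of_true hx (hB hy)
  · exact iff_of_false (hB hx) (not_not.mpr hy)
  · exact absurd hxy (h.2.2.2 hx hy hxy.ne)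

theorem not_adj_of_mem_iff (h : IsBipartition G W B) {x y : V} (hxy : x ∈ W ↔ y ∈ W) :
    ¬ G.Adj x y := fun hadj => by
  have := h.mem_iff_notMem_of_adj hadj
  tauto

/-- Here `a, …, f` play the roles of `0, …, 5` in `S113`. Bipartiteness excludes every chord
other than `af`, `be`, `ce`, and `b ≠ c` is the only coincidence of vertices that the
adjacencies do not already exclude. -/
theorem adj_or_adj_or_adj_of_S113Free (h : IsBipartition G W B) (hfree : IsEmpty (S113 ↪g G))
    {a b c d e f : V} (hab : G.Adj a b) (hac : G.Adj a c) (had : G.Adj a d)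
    (hde : G.Adj d e) (hef : G.Adj e f) (hbc : b ≠ c) :
    G.Adj a f ∨ G.Adj b e ∨ G.Adj c e := by
  by_contra! hchord
  obtain ⟨haf, hbe, hce⟩ := hchord
  have sab := h.mem_iff_notMem_of_adj hab
  have sac := h.mem_iff_notMem_of_adj hac
  have sad := h.mem_iff_notMem_of_adj had
  have sde := h.mem_iff_notMem_of_adj hde
  have sef := h.mem_iff_notMem_of_adj hef
  have hbc' : ¬ G.Adj b c := h.not_adj_of_mem_iff (by tauto)
  have hbd : ¬ G.Adj b d := h.not_adj_of_mem_iff (by tauto)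
  have hbf : ¬ G.Adj b f := h.not_adj_of_mem_iff (by tauto)
  have hcd : ¬ G.Adj c d := h.not_adj_of_mem_iff (by tauto)
  have hcf : ¬ G.Adj c f := h.not_adj_of_mem_iff (by tauto)
  have hdf : ¬ G.Adj d f := h.not_adj_of_mem_iff (by tauto)
  have hae : ¬ G.Adj a e := h.not_adj_of_mem_iff (by tauto)
  have hadj (i j : Fin 6) :
      G.Adj (![a, b, c, d, e, f] i) (![a, b, c, d, e, f] j) ↔ S113.Adj i j := by
    fin_cases i <;> fin_cases j <;> simp [S113, G.adj_comm, *]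
  have hinj : Function.Injective ![a, b, c, d, e, f] := by
    intro i j hij
    have hN (k : Fin 6) : S113.Adj k i ↔ S113.Adj k j := by rw [← hadj, ← hadj, hij]
    rcases S113_eq_or_twins_of_adj_iff hN with hij' | ⟨rfl, rfl⟩ | ⟨rfl, rfl⟩
    · exact hij'
    · exact absurd hij hbc
    · exact absurd hij.symm hbc
  exact hfree.false ⟨⟨_, hinj⟩, hadj _ _⟩

end IsBipartition

namespace SimpleGraph

variable {V : Type*} {G : SimpleGraph V} {W B : Set V} {n : ℕ}

def pathGraph.reverseIso (m : ℕ) : pathGraph m ≃g pathGraph m where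
  toEquiv := Fin.revPerm
  map_rel_iff' {a b} := by
    simp only [Fin.revPerm_apply, pathGraph_adj, Fin.val_rev]
    omega

@[simp]
theorem pathGraph.reverseIso_apply {m : ℕ} (i : Fin m) : pathGraph.reverseIso m i = i.rev :=
  rfl

theorem cycleGraph_adj_iff_val {u v : Fin (n + 2)} :
    (cycleGraph (n + 2)).Adj u v ↔
      (u.val + 1) % (n + 2) = v.val ∨ (v.val + 1) % (n + 2) = u.val := by
  rw [cycleGraph_adj, sub_eq_iff_eq_add, sub_eq_iff_eq_add, Fin.ext_iff, Fin.ext_iff,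
    Fin.val_add, Fin.val_add, Fin.val_one, add_comm 1, add_comm 1]
  grind

def cycleGraph.addRightIso (c : Fin (n + 2)) : cycleGraph (n + 2) ≃g cycleGraph (n + 2) where
  toEquiv := Equiv.addRight c
  map_rel_iff' := by simp [cycleGraph_adj]

def pathGraph.castSuccEmbedding : pathGraph (n + 1) ↪g cycleGraph (n + 2) where
  toEmbedding := Fin.castSuccEmb
  map_rel_iff' {a b} := by
    simp [cycleGraph_adj_iff_val, pathGraph_adj, Nat.mod_eq_of_lt (by omega : a.val + 1 < n + 2),
      Nat.mod_eq_of_lt (by omega : b.val + 1 < n + 2)]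

theorem exists_pathGraph_embedding_cycleGraph_apply_eq (k : Fin (n + 1)) (j : Fin (n + 2)) :
    ∃ e : pathGraph (n + 1) ↪g cycleGraph (n + 2), e k = j :=
  ⟨(cycleGraph.addRightIso (j - k.castSucc)).toEmbedding.comp pathGraph.castSuccEmbedding, by
    simp [cycleGraph.addRightIso, pathGraph.castSuccEmbedding]⟩

theorem Connected.exists_adj_of_not_surjective (hG : G.Connected) {α : Type*} {g : α → V}
    (a : α) (hg : ¬ Function.Surjective g) : ∃ u ∉ Set.range g, ∃ b, G.Adj u (g b) := by
  obtain ⟨u, hu⟩ := not_forall.1 hg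
  obtain ⟨d, -, hd, hd'⟩ :=
    (hG.preconnected u (g a)).some.exists_boundary_dart (Set.range g)ᶜ hu (by simp)
  obtain ⟨b, hb⟩ := not_not.1 hd'
  exact ⟨d.fst, hd, b, hb ▸ d.adj⟩

theorem exists_maximal_pathGraph_embedding [Fintype V] {k : ℕ}
    (h : Nonempty (pathGraph k ↪g G)) :
    ∃ m, k ≤ m ∧ Nonempty (pathGraph m ↪g G) ∧ IsEmpty (pathGraph (m + 1) ↪g G) := by
  classical
  let P (m : ℕ) : Prop := Nonempty (pathGraph m ↪g G)
  have hbound {m : ℕ} (hm : P m) : m ≤ Fintype.card V := by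
    simpa using Fintype.card_le_of_injective _ hm.some.injective
  refine ⟨Nat.findGreatest P (Fintype.card V), Nat.le_findGreatest (hbound h) h,
    Nat.findGreatest_spec (P := P) (hbound h) h, not_nonempty_iff.1 fun hm => ?_⟩
  exact Nat.findGreatest_is_greatest (Nat.lt_succ_self _) (hbound hm) hm

namespace Embedding

theorem notMem_range_comp {V' V'' : Type*} {G' : SimpleGraph V'} {G'' : SimpleGraph V''}
    {f : G' ↪g G} (e : G'' ↪g G') {w : V} (hw : w ∉ Set.range f) :
    w ∉ Set.range (f.comp e) := by
  rintro ⟨x, rfl⟩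
  exact hw ⟨_, rfl⟩

theorem adj_mk_iff (f : pathGraph (n + 1) ↪g G) {i j : ℕ} {hi : i < n + 1} {hj : j < n + 1} :
    G.Adj (f ⟨i, hi⟩) (f ⟨j, hj⟩) ↔ i + 1 = j ∨ j + 1 = i := by
  rw [f.map_adj_iff, pathGraph_adj]

theorem reverse_apply_mk (f : pathGraph (n + 1) ↪g G) {i j : ℕ} (hi : i < n + 1)
    (hij : i + j = n) :
    f.comp (pathGraph.reverseIso _).toEmbedding ⟨i, hi⟩ = f ⟨j, by omega⟩ := by
  show f (Fin.rev _) = _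
  congr 1
  ext
  simp only [Fin.val_rev]
  omega

theorem adj_add_two_of_adj (hbip : IsBipartition G W B) (hfree : IsEmpty (S113 ↪g G))
    (f : pathGraph (n + 1) ↪g G) {w : V} (hw : w ∉ Set.range f) {i : ℕ} (hi : 1 ≤ i)
    (hin : i + 3 ≤ n) (h : G.Adj w (f ⟨i, by omega⟩)) : G.Adj w (f ⟨i + 2, by omega⟩) := by
  by_contra h2
  rcases hbip.adj_or_adj_or_adj_of_S113Free hfree (a := f ⟨i, by omega⟩)
    (b := f ⟨i - 1, by omega⟩) (c := w) (d := f ⟨i + 1, by omega⟩) (e := f ⟨i + 2, by omega⟩)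
    (f := f ⟨i + 3, by omega⟩)
    (f.adj_mk_iff.2 (by omega)) h.symm (f.adj_mk_iff.2 (by omega)) (f.adj_mk_iff.2 (by omega))
    (f.adj_mk_iff.2 (by omega)) (fun h => hw ⟨_, h⟩) with h | h | h
  · rw [f.adj_mk_iff] at h; omega
  · rw [f.adj_mk_iff] at h; omega
  · exact h2 h

theorem adj_sub_two_of_adj (hbip : IsBipartition G W B) (hfree : IsEmpty (S113 ↪g G))
    (f : pathGraph (n + 1) ↪g G) {w : V} (hw : w ∉ Set.range f) {i : ℕ} (hi : 3 ≤ i)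
    (hin : i + 1 ≤ n) (h : G.Adj w (f ⟨i, by omega⟩)) : G.Adj w (f ⟨i - 2, by omega⟩) := by
  have := adj_add_two_of_adj hbip hfree (f.comp (pathGraph.reverseIso _).toEmbedding)
    (notMem_range_comp _ hw) (i := n - i) (by omega) (by omega)
    (by rwa [reverse_apply_mk _ _ (by omega : n - i + i = n)])
  rwa [reverse_apply_mk _ _ (by omega : n - i + 2 + (i - 2) = n)] at this

theorem not_adj_of_one_le_of_lt (hbip : IsBipartition G W B) (hfree : IsEmpty (S113 ↪g G))
    (f : pathGraph (n + 1) ↪g G) (hn : 7 ≤ n) {w : V} (hw : w ∉ Set.range f) (i : ℕ)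
    (hi : 1 ≤ i) (hin : i < n) : ¬ G.Adj w (f ⟨i, by omega⟩) := by
  induction i using Nat.strong_induction_on with
  | _ i ih =>
  intro h
  by_cases hi3 : 3 ≤ i
  · exact ih (i - 2) (by omega) (by omega) (by omega)
      (adj_sub_two_of_adj hbip hfree f hw hi3 hin h)
  have h2 := adj_add_two_of_adj hbip hfree f hw hi (by omega) h
  have h4 := adj_add_two_of_adj hbip hfree f hw (i := i + 2) (by omega) (by omega) h2
  rcases hbip.adj_or_adj_or_adj_of_S113Free hfree (a := f ⟨i, by omega⟩)
    (b := f ⟨i - 1, by omega⟩) (c := f ⟨i + 1, by omega⟩) (d := w) (e := f ⟨i + 4, by omega⟩)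
    (f := f ⟨i + 5, by omega⟩) (f.adj_mk_iff.2 (by omega)) (f.adj_mk_iff.2 (by omega)) h.symm h4
    (f.adj_mk_iff.2 (by omega)) (fun h => by simp [Fin.ext_iff] at h) with h | h | h <;>
  · rw [f.adj_mk_iff] at h; omega

theorem eq_zero_or_eq_last_of_adj (hbip : IsBipartition G W B) (hfree : IsEmpty (S113 ↪g G))
    (f : pathGraph (n + 1) ↪g G) (hn : 7 ≤ n) {w : V} (hw : w ∉ Set.range f)
    {i : Fin (n + 1)} (h : G.Adj w (f i)) : i = 0 ∨ i = Fin.last n := by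
  by_contra! hi
  obtain ⟨i, hin⟩ := i
  simp only [ne_eq, Fin.ext_iff, Fin.val_zero, Fin.val_last] at hi
  exact not_adj_of_one_le_of_lt hbip hfree f hn hw i (by omega) (by omega) h

theorem nonempty_pathGraph_succ_of_adj_iff (f : pathGraph (n + 1) ↪g G) {w : V}
    (hw : w ∉ Set.range f) (hadj : ∀ i, G.Adj w (f i) ↔ i = 0) :
    Nonempty (pathGraph (n + 2) ↪g G) := by
  refine ⟨⟨⟨Fin.cons w f, Fin.cons_injective_iff.2 ⟨hw, f.injective⟩⟩, fun {a b} => ?_⟩⟩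
  have hw0 (i : Fin (n + 1)) : G.Adj w (f i) ↔ (pathGraph (n + 2)).Adj 0 i.succ := by
    rw [hadj, pathGraph_adj, Fin.ext_iff]
    simp
  induction a using Fin.cases <;> induction b using Fin.cases
  · simp only [G.irrefl, (pathGraph _).irrefl]
  · simpa using hw0 _
  · simpa [G.adj_comm _ w, (pathGraph _).adj_comm _ 0] using hw0 _
  · simp [f.map_adj_iff, pathGraph_adj]

theorem nonempty_cycleGraph_of_adj_iff (f : pathGraph (n + 1) ↪g G) {w : V}
    (hw : w ∉ Set.range f) (hadj : ∀ i, G.Adj w (f i) ↔ i = 0 ∨ i = Fin.last n) :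
    Nonempty (cycleGraph (n + 2) ↪g G) := by
  refine ⟨⟨⟨Fin.snoc (α := fun _ => V) f w, Fin.snoc_injective_iff.2 ⟨f.injective, hw⟩⟩,
    fun {a b} => ?_⟩⟩
  have hwl (i : Fin (n + 1)) :
      G.Adj w (f i) ↔ (cycleGraph (n + 2)).Adj (Fin.last _) i.castSucc := by
    rw [hadj, cycleGraph_adj_iff_val]
    simp only [Fin.ext_iff, Fin.val_last, Fin.val_castSucc, Fin.val_zero,
      Nat.mod_eq_of_lt (by omega : i.val + 1 < n + 2), Nat.add_assoc, Nat.reduceAdd, Nat.mod_self]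
    omega
  induction a using Fin.lastCases <;> induction b using Fin.lastCases
  · simp only [G.irrefl, (cycleGraph _).irrefl]
  · simpa using hwl _
  · simpa [G.adj_comm _ w, (cycleGraph _).adj_comm _ (Fin.last _)] using hwl _
  · rename_i i j
    simp [f.map_adj_iff, pathGraph_adj, cycleGraph_adj_iff_val,
      Nat.mod_eq_of_lt (by omega : i.val + 1 < n + 2),
      Nat.mod_eq_of_lt (by omega : j.val + 1 < n + 2)]

theorem adj_last_of_adj_zero (hbip : IsBipartition G W B) (hfree : IsEmpty (S113 ↪g G))
    (f : pathGraph (n + 1) ↪g G) (hn : 7 ≤ n) (hmax : IsEmpty (pathGraph (n + 2) ↪g G))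
    {w : V} (hw : w ∉ Set.range f) (h0 : G.Adj w (f 0)) : G.Adj w (f (Fin.last n)) := by
  by_contra hlast
  refine hmax.false (nonempty_pathGraph_succ_of_adj_iff f hw fun i => ⟨fun hi => ?_, ?_⟩).some
  · exact (eq_zero_or_eq_last_of_adj hbip hfree f hn hw hi).resolve_right
      (by rintro rfl; exact hlast hi)
  · rintro rfl
    exact h0

theorem nonempty_cycleGraph_of_adj (hbip : IsBipartition G W B) (hfree : IsEmpty (S113 ↪g G))
    (f : pathGraph (n + 1) ↪g G) (hn : 7 ≤ n) (hmax : IsEmpty (pathGraph (n + 2) ↪g G))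
    {w : V} (hw : w ∉ Set.range f) {i : Fin (n + 1)} (h : G.Adj w (f i)) :
    Nonempty (cycleGraph (n + 2) ↪g G) := by
  have hends : G.Adj w (f 0) ∧ G.Adj w (f (Fin.last n)) := by
    rcases eq_zero_or_eq_last_of_adj hbip hfree f hn hw h with rfl | rfl
    · exact ⟨h, adj_last_of_adj_zero hbip hfree f hn hmax hw h⟩
    · have := adj_last_of_adj_zero hbip hfree (f.comp (pathGraph.reverseIso _).toEmbedding) hn
        hmax (notMem_range_comp _ hw) (by simpa using h)
      exact ⟨by simpa using this, h⟩
  refine nonempty_cycleGraph_of_adj_iff f hw fun i =>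
    ⟨eq_zero_or_eq_last_of_adj hbip hfree f hn hw, ?_⟩
  rintro (rfl | rfl)
  exacts [hends.1, hends.2]

end Embedding

end SimpleGraph

/-- Every finite connected bipartite `S_{1,1,3}`-free graph containing an induced
`P_8` is a chordless path or a chordless cycle. -/
theorem statement9 {V : Type} [Fintype V] (G : SimpleGraph V) (W B : Set V)
    (hbip : IsBipartition G W B) (hconn : G.Connected)
    (hfree : IsEmpty (S113 ↪g G)) (hP8 : Nonempty (pathGraph 8 ↪g G)) :
    (∃ n, Nonempty (G ≃g pathGraph n)) ∨
    (∃ n, 3 ≤ n ∧ Nonempty (G ≃g cycleGraph n)) := by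
  obtain ⟨m, hm, ⟨f⟩, hmax⟩ := exists_maximal_pathGraph_embedding hP8
  obtain ⟨n, rfl⟩ : ∃ n, m = n + 1 := ⟨m - 1, by omega⟩
  by_cases hf : Function.Surjective f
  · exact Or.inl ⟨n + 1, ⟨(RelIso.ofSurjective f hf).symm⟩⟩
  obtain ⟨w, hw, i, hi⟩ := hconn.exists_adj_of_not_surjective 0 hf
  obtain ⟨g⟩ := f.nonempty_cycleGraph_of_adj hbip hfree (by omega) hmax hw hi
  by_cases hg : Function.Surjective g
  · exact Or.inr ⟨n + 2, by omega, ⟨(RelIso.ofSurjective g hg).symm⟩⟩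
  obtain ⟨u, hu, j, hj⟩ := hconn.exists_adj_of_not_surjective 0 hg
  obtain ⟨e, he⟩ := exists_pathGraph_embedding_cycleGraph_apply_eq ⟨3, by omega⟩ j
  have hu3 : G.Adj u (g.comp e ⟨3, by omega⟩) := by simpa [he] using hj
  exact absurd hu3 <| (g.comp e).not_adj_of_one_le_of_lt hbip hfree (by omega)
    (Embedding.notMem_range_comp e hu) 3 (by omega) (by omega)
end

section
/- Let p be a positive integer and let H be a finite bipartite graph with parts W (white) and B (black) that is irreducible, S_{1,1,3}-free and K_{p,p}-free. If H contains an induced copy of the simple tree T_{p+2}, then H contains an induced copy of T_{p+2} whose central vertex (the vertex of degree p+2 of the copy) belongs to B. -/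
open SimpleGraph

/-!
Let `c` be the centre of an induced `T_{p+2}`, with legs `c - a i - b i`, and suppose `c` is white.
Forbidding `S_{1,1,3}` forces every neighbour of a leaf `b i` to be adjacent to `c`, and then
forces a black vertex adjacent to two leaves to be adjacent to all of them; such a vertex is the
black centre of an induced `T_{p+2}` with legs `x - b i - a i`. Otherwise every black vertex sees at
most one leaf. The white vertices other than the leaves that see some `a i` see all of them, so by
`K_{p,p}`-freeness there are fewer than `p` of them. The set `A` of white vertices seeing no `a i`
then has no neighbour among the `a i` and among distinct black neighbours `d i ≠ a i` of the
leaves, and `|B| = |W| + 1` leaves too few black vertices for `A` to expand.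
-/

lemma Set.nonempty_fin_embedding_of_le_ncard {α : Type*} [Finite α] {s : Set α} {n : ℕ}
    (h : n ≤ s.ncard) : Nonempty (Fin n ↪ s) := by
  have := Fintype.ofFinite s
  apply Function.Embedding.nonempty_of_card_le
  rwa [Fintype.card_fin, ← Nat.card_eq_fintype_card, Nat.card_coe_set_eq]

lemma Fin.exists_ne_ne_of_three_le {k : ℕ} (hk : 3 ≤ k) (i : Fin k) :
    ∃ j l : Fin k, j ≠ i ∧ l ≠ i ∧ j ≠ l := by
  have : 1 < (Finset.univ.erase i).card := by
    rw [Finset.card_erase_of_mem (Finset.mem_univ i), Finset.card_univ, Fintype.card_fin]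
    omega
  obtain ⟨j, hj, l, hl, hjl⟩ := Finset.one_lt_card.mp this
  exact ⟨j, l, Finset.ne_of_mem_erase hj, Finset.ne_of_mem_erase hl, hjl⟩

namespace simpleTree

variable {k : ℕ}

def center : Fin (2 * k + 1) := ⟨0, by omega⟩

def mid (i : Fin k) : Fin (2 * k + 1) := ⟨i + 1, by omega⟩

def leaf (i : Fin k) : Fin (2 * k + 1) := ⟨i + 1 + k, by omega⟩

lemma eq_center_or_mid_or_leaf (z : Fin (2 * k + 1)) :
    z = center ∨ (∃ i, z = mid i) ∨ ∃ i, z = leaf i := by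
  obtain ⟨z, hz⟩ := z
  by_cases h0 : z = 0
  · exact Or.inl (Fin.ext h0)
  by_cases hk : z ≤ k
  · exact Or.inr (Or.inl ⟨⟨z - 1, by omega⟩, Fin.ext (by simp only [mid]; omega)⟩)
  · exact Or.inr (Or.inr ⟨⟨z - 1 - k, by omega⟩, Fin.ext (by simp only [leaf]; omega)⟩)

lemma adj_iff {z w : Fin (2 * k + 1)} : (simpleTree k).Adj z w ↔
    (z.val = 0 ∧ 1 ≤ w.val ∧ w.val ≤ k) ∨ (w.val = 0 ∧ 1 ≤ z.val ∧ z.val ≤ k) ∨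
    (1 ≤ z.val ∧ z.val ≤ k ∧ w.val = z.val + k) ∨ (1 ≤ w.val ∧ w.val ≤ k ∧ z.val = w.val + k) := by
  simp only [simpleTree, fromRel_adj, ne_eq, Fin.ext_iff]
  omega

@[simp] lemma center_adj_mid (i : Fin k) : (simpleTree k).Adj center (mid i) := by
  simp [adj_iff, center, mid]

@[simp] lemma mid_adj_leaf_iff (i j : Fin k) : (simpleTree k).Adj (mid i) (leaf j) ↔ i = j := by
  simp only [adj_iff, mid, leaf, Fin.ext_iff]; omega

@[simp] lemma not_center_adj_leaf (i : Fin k) : ¬ (simpleTree k).Adj center (leaf i) := by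
  simp only [adj_iff, center, leaf]; omega

@[simp] lemma not_mid_adj_mid (i j : Fin k) : ¬ (simpleTree k).Adj (mid i) (mid j) := by
  simp only [adj_iff, mid]; omega

@[simp] lemma not_leaf_adj_leaf (i j : Fin k) : ¬ (simpleTree k).Adj (leaf i) (leaf j) := by
  simp only [adj_iff, leaf]; omega

lemma center_ne_leaf (i : Fin k) : center ≠ leaf i := by
  simp only [ne_eq, center, leaf, Fin.ext_iff]; omega

end simpleTree

section

variable {V : Type*} {G : SimpleGraph V} {W B : Set V} {u v : V}

namespace IsBipartition

lemma symm (h : IsBipartition G W B) : IsBipartition G B W :=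
  ⟨by rw [Set.union_comm, h.1], h.2.1.symm, h.2.2.2, h.2.2.1⟩

lemma mem_left_of_notMem_right (h : IsBipartition G W B) (hv : v ∉ B) : v ∈ W :=
  (h.1 ▸ Set.mem_univ v : v ∈ W ∪ B).resolve_right hv

lemma not_adj_of_mem_left (h : IsBipartition G W B) (hu : u ∈ W) (hv : v ∈ W) :
    ¬ G.Adj u v :=
  fun huv => h.2.2.1 hu hv huv.ne huv

lemma ne_of_mem (h : IsBipartition G W B) (hu : u ∈ W) (hv : v ∈ B) : u ≠ v :=
  fun huv => Set.disjoint_left.mp h.2.1 hu (huv ▸ hv)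

lemma mem_right_of_adj (h : IsBipartition G W B) (hu : u ∈ W) (huv : G.Adj u v) : v ∈ B :=
  by_contra fun hv => h.not_adj_of_mem_left hu (h.mem_left_of_notMem_right hv) huv

/-- In a bipartite graph only three of the ten non-edges of `S_{1,1,3}` need checking, the other
seven join vertices of the same colour; likewise only the twin leaves `v₁`, `v₂` can coincide
without contradicting the adjacencies. -/
lemma nonempty_S113_embedding (h : IsBipartition G W B) {v₀ v₁ v₂ v₃ v₄ v₅ : V}
    (h₀ : v₀ ∈ W) (h₀₁ : G.Adj v₀ v₁) (h₀₂ : G.Adj v₀ v₂) (h₀₃ : G.Adj v₀ v₃)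
    (h₃₄ : G.Adj v₃ v₄) (h₄₅ : G.Adj v₄ v₅) (h₀₅ : ¬ G.Adj v₀ v₅) (h₁₄ : ¬ G.Adj v₁ v₄)
    (h₂₄ : ¬ G.Adj v₂ v₄) (h₁₂ : v₁ ≠ v₂) : Nonempty (S113 ↪g G) := by
  have h₁ := h.mem_right_of_adj h₀ h₀₁
  have h₂ := h.mem_right_of_adj h₀ h₀₂
  have h₃ := h.mem_right_of_adj h₀ h₀₃
  have h₄ := h.symm.mem_right_of_adj h₃ h₃₄
  have h₅ := h.mem_right_of_adj h₄ h₄₅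
  have hW := h.not_adj_of_mem_left h₀ h₄
  have hB {x y : V} (hx : x ∈ B) (hy : y ∈ B) := h.symm.not_adj_of_mem_left hx hy
  let f : Fin 6 → V := ![v₀, v₁, v₂, v₃, v₄, v₅]
  have hf (i j : Fin 6) : G.Adj (f i) (f j) ↔ S113.Adj i j := by
    wlog hij : i ≤ j generalizing i j
    · rw [G.adj_comm, S113.adj_comm]
      exact this j i (le_of_not_ge hij)
    fin_cases i <;> fin_cases j <;>
      simp [f, S113, h₀₁, h₀₂, h₀₃, h₃₄, h₄₅, h₀₅, h₁₄, h₂₄, hW,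
        hB h₁ h₂, hB h₁ h₃, hB h₁ h₅, hB h₂ h₃, hB h₂ h₅, hB h₃ h₅] at hij ⊢
  have hinj : Function.Injective f := by
    intro i j hij
    fin_cases i <;> fin_cases j <;> simp only [f] at hij <;>
      first | rfl | simp_all [adj_comm]
  exact ⟨⟨⟨f, hinj⟩, hf _ _⟩⟩

lemma nonempty_completeBipartiteGraph_embedding {α β : Type*} (h : IsBipartition G W B)
    (w : α ↪ V) (x : β ↪ V) (hw : ∀ i, w i ∈ W) (hx : ∀ j, x j ∈ B)
    (hadj : ∀ i j, G.Adj (w i) (x j)) : Nonempty (completeBipartiteGraph α β ↪g G) := by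
  refine ⟨⟨⟨Sum.elim w x, ?_⟩, ?_⟩⟩
  · rintro (i | i) (j | j) hij <;> simp only [Sum.elim_inl, Sum.elim_inr] at hij
    · rw [w.injective hij]
    · exact absurd hij (h.ne_of_mem (hw i) (hx j))
    · exact absurd hij.symm (h.ne_of_mem (hw j) (hx i))
    · rw [x.injective hij]
  · rintro (i | i) (j | j)
    · exact iff_of_false (h.not_adj_of_mem_left (hw i) (hw j)) (by simp)
    · exact iff_of_true (hadj i j) (by simp)
    · exact iff_of_true (hadj j i).symm (by simp)
    · exact iff_of_false (h.symm.not_adj_of_mem_left (hx i) (hx j)) (by simp)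

lemma nonempty_completeBipartiteGraph_embedding_of_le_ncard [Finite V]
    (h : IsBipartition G W B) {S T : Set V} {p q : ℕ} (hS : S ⊆ W) (hT : T ⊆ B)
    (hST : ∀ u ∈ S, ∀ v ∈ T, G.Adj u v) (hp : p ≤ S.ncard) (hq : q ≤ T.ncard) :
    Nonempty (completeBipartiteGraph (Fin p) (Fin q) ↪g G) := by
  obtain ⟨w⟩ := Set.nonempty_fin_embedding_of_le_ncard hp
  obtain ⟨x⟩ := Set.nonempty_fin_embedding_of_le_ncard hq
  exact h.nonempty_completeBipartiteGraph_embedding (w.trans (Function.Embedding.subtype _))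
    (x.trans (Function.Embedding.subtype _)) (fun i => hS (w i).2) (fun j => hT (x j).2)
    (fun i j => hST _ (w i).2 _ (x j).2)

end IsBipartition

lemma exists_adj_ne_of_ncard_lt
    (hexp : ∀ A ⊆ W, A.Nonempty → A.ncard < (NSet G A ∩ B).ncard) (hu : u ∈ W) (y : V) :
    ∃ v, G.Adj u v ∧ v ≠ y := by
  have h := hexp {u} (Set.singleton_subset_iff.mpr hu) (Set.singleton_nonempty u)
  rw [Set.ncard_singleton] at h
  obtain ⟨v, ⟨⟨u', rfl, huv⟩, -⟩, hvy⟩ := Set.exists_ne_of_one_lt_ncard h y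
  exact ⟨v, huv, hvy⟩

open simpleTree

/-- In a bipartite graph with `c` white this is an induced `T_k` centred at `c`: the non-edges of
`T_k` not recorded here join two vertices of the same colour. -/
structure IsSpider (G : SimpleGraph V) {k : ℕ} (c : V) (a b : Fin k → V) : Prop where
  adj_mid : ∀ i, G.Adj c (a i)
  mid_adj_leaf_iff : ∀ i j, G.Adj (a i) (b j) ↔ i = j
  ne_leaf : ∀ i, c ≠ b i

namespace IsSpider

variable {k : ℕ} {c x : V} {a b : Fin k → V}

lemma of_embedding (φ : simpleTree k ↪g G) :
    IsSpider G (φ center) (fun i => φ (mid i)) (fun i => φ (leaf i)) where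
  adj_mid i := φ.map_adj_iff.mpr (center_adj_mid i)
  mid_adj_leaf_iff i j := by rw [φ.map_adj_iff, simpleTree.mid_adj_leaf_iff]
  ne_leaf i := φ.injective.ne (center_ne_leaf i)

lemma mid_adj_leaf (hs : IsSpider G c a b) (i : Fin k) : G.Adj (a i) (b i) :=
  (hs.mid_adj_leaf_iff i i).mpr rfl

lemma not_mid_adj_leaf (hs : IsSpider G c a b) {i j : Fin k} (hij : i ≠ j) :
    ¬ G.Adj (a i) (b j) :=
  (hs.mid_adj_leaf_iff i j).not.mpr hij

lemma mid_injective (hs : IsSpider G c a b) : Function.Injective a := fun i j hij =>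
  (hs.mid_adj_leaf_iff i j).mp (hij ▸ hs.mid_adj_leaf j)

lemma leaf_injective (hs : IsSpider G c a b) : Function.Injective b := fun i j hij =>
  (hs.mid_adj_leaf_iff i j).mp (hij ▸ hs.mid_adj_leaf i)

lemma mid_mem (hs : IsSpider G c a b) (hWB : IsBipartition G W B) (hc : c ∈ W) (i : Fin k) :
    a i ∈ B :=
  hWB.mem_right_of_adj hc (hs.adj_mid i)

lemma leaf_mem (hs : IsSpider G c a b) (hWB : IsBipartition G W B) (hc : c ∈ W) (i : Fin k) :
    b i ∈ W :=
  hWB.symm.mem_right_of_adj (hs.mid_mem hWB hc i) (hs.mid_adj_leaf i)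

lemma _root_.IsBipartition.exists_simpleTree_embedding
    (hWB : IsBipartition G W B) (hc : c ∈ W) (hs : IsSpider G c a b) :
    ∃ φ : simpleTree k ↪g G, φ center = c := by
  let f : Fin (2 * k + 1) → V := fun z =>
    if h₀ : z.val = 0 then c
    else if h : z.val ≤ k then a ⟨z - 1, by omega⟩ else b ⟨z - 1 - k, by omega⟩
  have f_center : f center = c := rfl
  have f_mid (i : Fin k) : f (mid i) = a i := by simp [f, mid]
  have f_leaf (i : Fin k) : f (leaf i) = b i := by simp [f, leaf]
  have ha := hs.mid_mem hWB hc
  have hb := hs.leaf_mem hWB hc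
  have hinj : Function.Injective f := by
    intro z w hzw
    rcases eq_center_or_mid_or_leaf z with rfl | ⟨i, rfl⟩ | ⟨i, rfl⟩ <;>
    rcases eq_center_or_mid_or_leaf w with rfl | ⟨j, rfl⟩ | ⟨j, rfl⟩ <;>
    simp only [f_center, f_mid, f_leaf] at hzw
    · rfl
    · exact absurd hzw (hWB.ne_of_mem hc (ha j))
    · exact absurd hzw (hs.ne_leaf j)
    · exact absurd hzw.symm (hWB.ne_of_mem hc (ha i))
    · rw [hs.mid_injective hzw]
    · exact absurd hzw.symm (hWB.ne_of_mem (hb j) (ha i))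
    · exact absurd hzw.symm (hs.ne_leaf i)
    · exact absurd hzw (hWB.ne_of_mem (hb i) (ha j))
    · rw [hs.leaf_injective hzw]
  have hcb (j : Fin k) : ¬ G.Adj c (b j) := hWB.not_adj_of_mem_left hc (hb j)
  have haa (i j : Fin k) : ¬ G.Adj (a i) (a j) := hWB.symm.not_adj_of_mem_left (ha i) (ha j)
  have hbb (i j : Fin k) : ¬ G.Adj (b i) (b j) := hWB.not_adj_of_mem_left (hb i) (hb j)
  have hadj (z w) : G.Adj (f z) (f w) ↔ (simpleTree k).Adj z w := by
    rcases eq_center_or_mid_or_leaf z with rfl | ⟨i, rfl⟩ | ⟨i, rfl⟩ <;>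
    rcases eq_center_or_mid_or_leaf w with rfl | ⟨j, rfl⟩ | ⟨j, rfl⟩ <;>
    simp [f_center, f_mid, f_leaf, hs.adj_mid, hs.mid_adj_leaf_iff, hcb, haa, hbb,
      G.adj_comm (a _) c, G.adj_comm (b _) c, G.adj_comm (b _) (a _),
      (simpleTree k).adj_comm (mid _) center, (simpleTree k).adj_comm (leaf _) center,
      (simpleTree k).adj_comm (leaf _) (mid _), eq_comm]
  exact ⟨⟨⟨f, hinj⟩, hadj _ _⟩, f_center⟩

lemma swap (hs : IsSpider G c a b) (hx : ∀ i, G.Adj x (b i)) (hxa : ∀ i, x ≠ a i) :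
    IsSpider G x b a where
  adj_mid := hx
  mid_adj_leaf_iff i j := by rw [G.adj_comm, hs.mid_adj_leaf_iff, eq_comm]
  ne_leaf := hxa

lemma adj_of_adj_leaf (hs : IsSpider G c a b) (hWB : IsBipartition G W B) (hc : c ∈ W)
    (hS : IsEmpty (S113 ↪g G)) (hk : 3 ≤ k) {i : Fin k} (hx : G.Adj (b i) x) : G.Adj c x := by
  obtain ⟨j, l, hj, hl, hjl⟩ := Fin.exists_ne_ne_of_three_le hk i
  by_contra hcx
  exact (hWB.nonempty_S113_embedding hc (hs.adj_mid j) (hs.adj_mid l) (hs.adj_mid i)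
    (hs.mid_adj_leaf i) hx hcx (hs.not_mid_adj_leaf hj) (hs.not_mid_adj_leaf hl)
    (hs.mid_injective.ne hjl)).elim hS.false

lemma adj_leaf_of_adj_two_leaves (hs : IsSpider G c a b) (hWB : IsBipartition G W B)
    (hc : c ∈ W) (hS : IsEmpty (S113 ↪g G)) (hk : 3 ≤ k) {i₁ i₂ : Fin k} (hi : i₁ ≠ i₂)
    (hx₁ : G.Adj x (b i₁)) (hx₂ : G.Adj x (b i₂)) (j : Fin k) : G.Adj x (b j) := by
  by_cases hj₁ : j = i₁
  · exact hj₁ ▸ hx₁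
  by_cases hj₂ : j = i₂
  · exact hj₂ ▸ hx₂
  by_contra hxj
  have hx : x ∈ B := hWB.mem_right_of_adj (hs.leaf_mem hWB hc i₁) hx₁.symm
  exact (hWB.symm.nonempty_S113_embedding hx hx₁ hx₂
    (hs.adj_of_adj_leaf hWB hc hS hk hx₁.symm).symm (hs.adj_mid j) (hs.mid_adj_leaf j) hxj
    (fun h => hs.not_mid_adj_leaf hj₁ h.symm) (fun h => hs.not_mid_adj_leaf hj₂ h.symm)
    (hs.leaf_injective.ne hi)).elim hS.false

lemma isSpider_of_adj_two_leaves (hs : IsSpider G c a b) (hWB : IsBipartition G W B)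
    (hc : c ∈ W) (hS : IsEmpty (S113 ↪g G)) (hk : 3 ≤ k) {i₁ i₂ : Fin k} (hi : i₁ ≠ i₂)
    (hx₁ : G.Adj x (b i₁)) (hx₂ : G.Adj x (b i₂)) : IsSpider G x b a :=
  hs.swap (hs.adj_leaf_of_adj_two_leaves hWB hc hS hk hi hx₁ hx₂) fun i hxi =>
    hi (((hs.mid_adj_leaf_iff i i₁).mp (hxi ▸ hx₁)).symm.trans
      ((hs.mid_adj_leaf_iff i i₂).mp (hxi ▸ hx₂)))

lemma adj_mid_of_adj_mid (hs : IsSpider G c a b) (hWB : IsBipartition G W B) (hc : c ∈ W)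
    (hS : IsEmpty (S113 ↪g G)) {i : Fin k} (hu : G.Adj u (a i)) (hub : u ≠ b i) (j : Fin k) :
    G.Adj u (a j) := by
  by_cases hji : j = i
  · exact hji ▸ hu
  by_contra huj
  exact (hWB.symm.nonempty_S113_embedding (hs.mid_mem hWB hc i) (hs.mid_adj_leaf i) hu.symm
    (hs.adj_mid i).symm (hs.adj_mid j) (hs.mid_adj_leaf j) (hs.not_mid_adj_leaf (Ne.symm hji))
    (fun h => hs.not_mid_adj_leaf hji h.symm) huj hub.symm).elim hS.false

lemma not_adj_of_forall_not_adj_mid (hs : IsSpider G c a b) (hWB : IsBipartition G W B)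
    (hc : c ∈ W) (hS : IsEmpty (S113 ↪g G)) (hk : 3 ≤ k) {i : Fin k} (hx : G.Adj x (b i))
    (hx_unique : ∀ j, G.Adj x (b j) → j = i) (hu : ∀ j, ¬ G.Adj u (a j)) : ¬ G.Adj x u := by
  intro hxu
  obtain ⟨j, -, hji, -⟩ := Fin.exists_ne_ne_of_three_le hk i
  have hx' : x ∈ B := hWB.mem_right_of_adj (hs.leaf_mem hWB hc i) hx.symm
  exact (hWB.symm.nonempty_S113_embedding hx' hx hxu
    (hs.adj_of_adj_leaf hWB hc hS hk hx.symm).symm (hs.adj_mid j) (hs.mid_adj_leaf j)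
    (fun h => hji (hx_unique j h)) (fun h => hs.not_mid_adj_leaf hji h.symm) (hu j)
    (fun h => hu i (h ▸ hs.mid_adj_leaf i).symm)).elim hS.false

lemma ncard_adj_mid_lt [Finite V] (hs : IsSpider G c a b) (hWB : IsBipartition G W B)
    (hc : c ∈ W) (hS : IsEmpty (S113 ↪g G)) {p : ℕ} (hpk : p ≤ k)
    (hK : IsEmpty (completeBipartiteGraph (Fin p) (Fin p) ↪g G)) :
    {u | (∃ j, G.Adj u (a j)) ∧ ∀ i, u ≠ b i}.ncard < p := by
  by_contra! hp
  refine (hWB.nonempty_completeBipartiteGraph_embedding_of_le_ncard (T := Set.range a)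
    ?_ ?_ ?_ hp ?_).elim hK.false
  · rintro u ⟨⟨j, hj⟩, -⟩
    exact hWB.symm.mem_right_of_adj (hs.mid_mem hWB hc j) hj.symm
  · rintro _ ⟨i, rfl⟩
    exact hs.mid_mem hWB hc i
  · rintro u ⟨⟨j, hj⟩, hu⟩ _ ⟨i, rfl⟩
    exact hs.adj_mid_of_adj_mid hWB hc hS hj (hu j) i
  · rwa [Set.ncard_range_of_injective hs.mid_injective, Nat.card_fin]

lemma exists_leaf_partners (hs : IsSpider G c a b) (hWB : IsBipartition G W B) (hc : c ∈ W)
    (hexp : ∀ A ⊆ W, A.Nonempty → A.ncard < (NSet G A ∩ B).ncard)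
    (hb_unique : ∀ x i j, G.Adj x (b i) → G.Adj x (b j) → i = j) :
    ∃ d : Fin k → V, (∀ i, G.Adj (b i) (d i)) ∧ Function.Injective d ∧
      Disjoint (Set.range a) (Set.range d) := by
  choose d hd hda using fun i => exists_adj_ne_of_ncard_lt hexp (hs.leaf_mem hWB hc i) (a i)
  refine ⟨d, hd, fun i j hij => hb_unique (d i) i j (hd i).symm (hij ▸ (hd j).symm), ?_⟩
  rw [Set.disjoint_left]
  rintro _ ⟨j, rfl⟩ ⟨i, hij⟩
  obtain rfl := (hs.mid_adj_leaf_iff j i).mp (hij ▸ (hd i).symm)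
  exact hda j hij

lemma false_of_adj_leaf_unique [Finite V] (hs : IsSpider G c a b) (hWB : IsBipartition G W B)
    (hc : c ∈ W) (hS : IsEmpty (S113 ↪g G)) (hk : 3 ≤ k) (hcard : W.ncard + 1 = B.ncard)
    (hexp : ∀ A ⊆ W, A.Nonempty → A.ncard < (NSet G A ∩ B).ncard)
    (hN : {u | (∃ j, G.Adj u (a j)) ∧ ∀ i, u ≠ b i}.ncard + 3 ≤ k)
    (hb_unique : ∀ x i j, G.Adj x (b i) → G.Adj x (b j) → i = j) : False := by
  obtain ⟨d, hd, hd_inj, had⟩ := hs.exists_leaf_partners hWB hc hexp hb_unique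
  set N := {u | (∃ j, G.Adj u (a j)) ∧ ∀ i, u ≠ b i}
  set A := {u | u ∈ W ∧ ∀ j, ¬ G.Adj u (a j)}
  set R := Set.range a ∪ Set.range d
  have hW : W ⊆ N ∪ Set.range b ∪ A := by
    intro u hu
    by_cases huA : ∀ j, ¬ G.Adj u (a j)
    · exact Or.inr ⟨hu, huA⟩
    by_cases hub : u ∈ Set.range b
    · exact Or.inl (Or.inr hub)
    exact Or.inl (Or.inl ⟨not_forall_not.mp huA, fun i h => hub ⟨i, h.symm⟩⟩)
  have hWcard : W.ncard ≤ N.ncard + k + A.ncard := by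
    calc W.ncard ≤ (N ∪ Set.range b ∪ A).ncard := Set.ncard_le_ncard hW
      _ ≤ N.ncard + (Set.range b).ncard + A.ncard :=
        (Set.ncard_union_le _ _).trans (by gcongr; exact Set.ncard_union_le _ _)
      _ = N.ncard + k + A.ncard := by
        rw [Set.ncard_range_of_injective hs.leaf_injective, Nat.card_fin]
  have hR : R ⊆ B := by
    rintro _ (⟨i, rfl⟩ | ⟨i, rfl⟩)
    · exact hs.mid_mem hWB hc i
    · exact hWB.mem_right_of_adj (hs.leaf_mem hWB hc i) (hd i)
  have hRcard : R.ncard = k + k := by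
    rw [Set.ncard_union_eq had, Set.ncard_range_of_injective hs.mid_injective,
      Set.ncard_range_of_injective hd_inj, Nat.card_fin]
  have hNA : NSet G A ∩ B ⊆ B \ R := by
    rintro v ⟨⟨u, ⟨-, hu⟩, huv⟩, hv⟩
    refine ⟨hv, ?_⟩
    rintro (⟨j, rfl⟩ | ⟨i, rfl⟩)
    · exact hu j huv
    · exact hs.not_adj_of_forall_not_adj_mid hWB hc hS hk (hd i).symm
        (fun j h => hb_unique _ _ _ h (hd i).symm) hu huv.symm
  have hBR := Set.ncard_sdiff_add_ncard_of_subset hR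
  -- `|B \ R| = |W| + 1 - 2k ≤ |N| + 1 - k + |A| ≤ |A| - 2`, and `|B| ≥ |R|` forces `|A| ≥ 2`
  have hA : A.Nonempty := Set.nonempty_of_ncard_ne_zero (by omega)
  have := hexp A (fun u hu => hu.1) hA
  have := Set.ncard_le_ncard hNA
  omega

lemma exists_isSpider_swap [Finite V] {p : ℕ} {a b : Fin (p + 2) → V}
    (hs : IsSpider G c a b) (hWB : IsBipartition G W B) (hc : c ∈ W) (hS : IsEmpty (S113 ↪g G))
    (hK : IsEmpty (completeBipartiteGraph (Fin p) (Fin p) ↪g G)) (hcard : W.ncard + 1 = B.ncard)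
    (hexp : ∀ A ⊆ W, A.Nonempty → A.ncard < (NSet G A ∩ B).ncard) :
    ∃ x ∈ B, IsSpider G x b a := by
  have hN := hs.ncard_adj_mid_lt hWB hc hS (by omega) hK
  have hp : 0 < {u | (∃ j, G.Adj u (a j)) ∧ ∀ i, u ≠ b i}.ncard :=
    (Set.ncard_pos).mpr ⟨c, ⟨0, hs.adj_mid 0⟩, hs.ne_leaf⟩
  by_contra! hno
  refine hs.false_of_adj_leaf_unique hWB hc hS (by omega) hcard hexp (by omega)
    fun x i j hi hj => by_contra fun hij => ?_
  exact hno x (hWB.mem_right_of_adj (hs.leaf_mem hWB hc i) hi.symm)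
    (hs.isSpider_of_adj_two_leaves hWB hc hS (by omega) hij hi hj)

end IsSpider

end

/-- If an irreducible `(S_{1,1,3}, K_{p,p})`-free bipartite graph with white part `W`
and black part `B` contains an induced copy of `T_{p+2}`, then it contains an induced
copy of `T_{p+2}` whose central vertex is black. (Vertex `0` of `simpleTree (p+2)` is
its centre.) -/
theorem statement12 {V : Type} [Fintype V] (p : ℕ)
    (G : SimpleGraph V) (W B : Set V) (h : IrreducibleBip G W B)
    (hS : IsEmpty (S113 ↪g G))
    (hK : IsEmpty (completeBipartiteGraph (Fin p) (Fin p) ↪g G))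
    (hT : Nonempty (simpleTree (p + 2) ↪g G)) :
    ∃ φ : simpleTree (p + 2) ↪g G, φ ⟨0, by omega⟩ ∈ B := by
  obtain ⟨hWB, hcard, hexp, -⟩ := h
  obtain ⟨φ⟩ := hT
  by_cases hc : φ simpleTree.center ∈ B
  · exact ⟨φ, hc⟩
  obtain ⟨x, hx, hs⟩ := (IsSpider.of_embedding φ).exists_isSpider_swap hWB
    (hWB.mem_left_of_notMem_right hc) hS hK hcard hexp
  obtain ⟨ψ, rfl⟩ := hWB.symm.exists_simpleTree_embedding hx hs
  exact ⟨ψ, hx⟩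
end
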